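/- Let m ≥ 1 be an integer, and let r_1, …, r_m ∈ [0,1] and ω_1, …, ω_m ∈ ℝ be such that ∫₀¹ s(x)·x dx = Σ_{i=1}^{m} ω_i s(r_i) for every polynomial s of degree at most 2m−1. Set θ_j = 2πj/(2m) for j = 1, …, 2m. Then for every ℓ ∈ {0,1} and all nonnegative integers N, n with N + 2n ≤ 2m−1, the integral of the Zernike polynomial Z_{N,n}^ℓ over the unit disk D ⊂ ℝ² satisfies ∫_D Z_{N,n}^ℓ(x) dx = ( Σ_{i=1}^{m} R_{N,n}(r_i) ω_i ) · ( Σ_{j=1}^{2m} (2π/(2m)) S_N^ℓ(θ_j) ). -/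
import Mathlib


open Finset Real
open Polynomial

/-- The two-dimensional radial Zernike polynomial `R_{N,n}`. -/
noncomputable def zernikeR (N n : ℕ) (x : ℝ) : ℝ :=
  x ^ N * ∑ k ∈ Finset.range (n + 1),
    (-1 : ℝ) ^ k * (Nat.choose (n + N) k : ℝ) * (Nat.choose n k : ℝ) *
      x ^ (2 * (n - k)) * (1 - x ^ 2) ^ k

/-- The angular factor `S_N^ℓ` of the Zernike polynomial `Z_{N,n}^ℓ`. -/
noncomputable def zernikeS (N : ℕ) (ℓ : Fin 2) (θ : ℝ) : ℝ :=
  if N = 0 then 1 / Real.sqrt (2 * Real.pi)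
  else if ℓ = 0 then Real.sin (N * θ) / Real.sqrt Real.pi
  else Real.cos (N * θ) / Real.sqrt Real.pi


noncomputable def zernikeRPoly (N n : ℕ) : Polynomial ℝ :=
  X ^ N * ∑ k ∈ Finset.range (n + 1),
    C ((-1 : ℝ) ^ k * (Nat.choose (n + N) k : ℝ) * (Nat.choose n k : ℝ)) *
      X ^ (2 * (n - k)) * (1 - X ^ 2) ^ k

lemma zernikeRPoly_eval (N n : ℕ) (x : ℝ) :
    (zernikeRPoly N n).eval x = zernikeR N n x := by
  simp [zernikeRPoly, zernikeR, eval_finset_sum, mul_assoc]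

lemma zernikeRPoly_natDegree_le (N n : ℕ) :
    (zernikeRPoly N n).natDegree ≤ N + 2 * n := by
  refine (natDegree_mul_le).trans ?_
  have h1 : (X ^ N : Polynomial ℝ).natDegree ≤ N := natDegree_X_pow_le N
  refine add_le_add h1 ?_
  refine natDegree_sum_le_of_forall_le _ _ fun k hk => ?_
  have hk' : k ≤ n := Nat.lt_succ_iff.mp (Finset.mem_range.mp hk)
  refine natDegree_mul_le.trans ?_
  have h2 : (C ((-1 : ℝ) ^ k * (Nat.choose (n + N) k : ℝ) * (Nat.choose n k : ℝ)) *
      X ^ (2 * (n - k))).natDegree ≤ 2 * (n - k) := by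
    refine natDegree_mul_le.trans ?_
    rw [natDegree_C, zero_add]
    exact natDegree_X_pow_le _
  have h3 : ((1 - X ^ 2 : Polynomial ℝ) ^ k).natDegree ≤ 2 * k := by
    refine natDegree_pow_le.trans ?_
    have : (1 - X ^ 2 : Polynomial ℝ).natDegree ≤ 2 := by
      refine (natDegree_sub_le _ _).trans ?_
      simp [natDegree_X_pow_le]
    calc k * (1 - X ^ 2 : Polynomial ℝ).natDegree ≤ k * 2 := Nat.mul_le_mul_left k this
      _ = 2 * k := Nat.mul_comm _ _
  calc _ ≤ 2 * (n - k) + 2 * k := add_le_add h2 h3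
    _ ≤ 2 * n := by omega

lemma key_exp_sum (M N : ℕ) (h0 : 0 < N) (hN : N < M) :
    (∑ j ∈ Finset.Icc 1 M, Complex.exp ((((N : ℝ) * ((j:ℝ) * (2*Real.pi/M)) : ℝ)) * Complex.I)) = 0 := by
  have hM : 0 < M := h0.trans hN
  have hMc : (M : ℂ) ≠ 0 := Nat.cast_ne_zero.mpr hM.ne'
  have hπ := Real.pi_pos
  set z : ℂ := Complex.exp ((N : ℂ) * (2 * Real.pi / M) * Complex.I) with hz
  have hterm : ∀ j : ℕ, Complex.exp ((((N : ℝ) * ((j:ℝ) * (2*Real.pi/M)) : ℝ)) * Complex.I) = z ^ j := by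
    intro j
    rw [hz, ← Complex.exp_nat_mul]
    congr 1
    push_cast
    ring
  simp only [hterm]
  have hzM : z ^ M = 1 := by
    rw [hz, ← Complex.exp_nat_mul]
    have h1 : (M : ℂ) * ((N : ℂ) * (2 * Real.pi / M) * Complex.I) = (N : ℤ) * (2 * Real.pi * Complex.I) := by
      push_cast
      field_simp
    rw [h1, Complex.exp_int_mul_two_pi_mul_I]
  have hz1 : z ≠ 1 := by
    intro h
    rw [hz, Complex.exp_eq_one_iff] at h
    obtain ⟨k, hk⟩ := h
    have him := congrArg Complex.im hk
    simp [Complex.mul_im, Complex.mul_re] at him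
    have hNM : (N : ℝ) = k * M := by
      field_simp at him
      nlinarith [him]
    have hNM' : (N : ℤ) = k * M := by exact_mod_cast hNM
    have hdvd : (M:ℤ) ∣ (N:ℤ) := ⟨k, by linarith [hNM']⟩
    have hdvd' : M ∣ N := Int.natCast_dvd_natCast.mp hdvd
    exact absurd (Nat.le_of_dvd h0 hdvd') (by omega)
  rw [← Finset.Ico_add_one_right_eq_Icc, Finset.sum_Ico_eq_sum_range]
  have : ∀ i ∈ Finset.range (M + 1 - 1), z ^ (1 + i) = z * z ^ i := by
    intro i _; rw [pow_add, pow_one]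
  rw [Finset.sum_congr rfl this, ← Finset.mul_sum, geom_sum_eq hz1]
  simp [hzM]

lemma key_sin_sum (M N : ℕ) (h0 : 0 < N) (hN : N < M) :
    ∑ j ∈ Finset.Icc 1 M, Real.sin ((N:ℝ) * ((j:ℝ) * (2*Real.pi/M))) = 0 := by
  have h2 := congrArg Complex.im (key_exp_sum M N h0 hN)
  rw [Complex.im_sum] at h2
  refine Eq.trans (Finset.sum_congr rfl fun j _ => (Complex.exp_ofReal_mul_I_im ((N:ℝ) * ((j:ℝ) * (2*Real.pi/M)))).symm) ?_
  simpa using h2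

lemma key_cos_sum (M N : ℕ) (h0 : 0 < N) (hN : N < M) :
    ∑ j ∈ Finset.Icc 1 M, Real.cos ((N:ℝ) * ((j:ℝ) * (2*Real.pi/M))) = 0 := by
  have h2 := congrArg Complex.re (key_exp_sum M N h0 hN)
  rw [Complex.re_sum] at h2
  refine Eq.trans (Finset.sum_congr rfl fun j _ => (Complex.exp_ofReal_mul_I_re ((N:ℝ) * ((j:ℝ) * (2*Real.pi/M)))).symm) ?_
  simpa using h2

lemma int_sin (N : ℕ) (h0 : 0 < N) :
    ∫ θ in (0:ℝ)..(2*Real.pi), Real.sin ((N:ℝ) * θ) = 0 := by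
  have hc : (N:ℝ) ≠ 0 := Nat.cast_ne_zero.mpr h0.ne'
  rw [intervalIntegral.integral_comp_mul_left Real.sin hc, integral_sin]
  simp [Real.cos_nat_mul_two_pi]

lemma int_cos (N : ℕ) (h0 : 0 < N) :
    ∫ θ in (0:ℝ)..(2*Real.pi), Real.cos ((N:ℝ) * θ) = 0 := by
  have hc : (N:ℝ) ≠ 0 := Nat.cast_ne_zero.mpr h0.ne'
  rw [intervalIntegral.integral_comp_mul_left Real.cos hc, integral_cos]
  have h := Real.sin_nat_mul_pi (2*N)
  rw [show ((2*N:ℕ):ℝ)*Real.pi = (N:ℝ)*(2*Real.pi) by push_cast; ring] at h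
  simp [h]

theorem zernike_quadrature
    (m : ℕ) (hm : 1 ≤ m) (r ω : ℕ → ℝ) (hr : ∀ i < m, r i ∈ Set.Icc (0:ℝ) 1)
    (hquad : ∀ s : Polynomial ℝ, s.natDegree ≤ 2 * m - 1 →
      ∫ x in (0:ℝ)..1, s.eval x * x = ∑ i ∈ Finset.range m, ω i * s.eval (r i))
    (ℓ : Fin 2) (N n : ℕ) (hNn : N + 2 * n ≤ 2 * m - 1) :
    (∫ ρ in (0:ℝ)..1, ∫ θ in (0:ℝ)..(2 * Real.pi),
        zernikeR N n ρ * zernikeS N ℓ θ * ρ)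
      = (∑ i ∈ Finset.range m, zernikeR N n (r i) * ω i)
        * (∑ j ∈ Finset.Icc 1 (2 * m),
            (2 * Real.pi / (2 * m)) * zernikeS N ℓ ((j : ℝ) * (2 * Real.pi / (2 * m)))) := by
  have hm0 : (0:ℝ) < 2 * m := by positivity
  -- factor the inner integral
  have hinner : ∀ ρ : ℝ, (∫ θ in (0:ℝ)..(2 * Real.pi), zernikeR N n ρ * zernikeS N ℓ θ * ρ)
      = (zernikeR N n ρ * ρ) * ∫ θ in (0:ℝ)..(2 * Real.pi), zernikeS N ℓ θ := by
    intro ρ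
    rw [← intervalIntegral.integral_const_mul]
    apply intervalIntegral.integral_congr
    intro θ _
    dsimp
    ring
  simp only [hinner]
  rw [intervalIntegral.integral_mul_const]
  -- radial quadrature
  have hrad : ∫ ρ in (0:ℝ)..1, zernikeR N n ρ * ρ
      = ∑ i ∈ Finset.range m, zernikeR N n (r i) * ω i := by
    have hdeg : (zernikeRPoly N n).natDegree ≤ 2 * m - 1 :=
      le_trans (zernikeRPoly_natDegree_le N n) (by omega)
    calc ∫ ρ in (0:ℝ)..1, zernikeR N n ρ * ρ
        = ∫ x in (0:ℝ)..1, (zernikeRPoly N n).eval x * x := by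
          simp [zernikeRPoly_eval]
      _ = ∑ i ∈ Finset.range m, ω i * (zernikeRPoly N n).eval (r i) := hquad _ hdeg
      _ = ∑ i ∈ Finset.range m, zernikeR N n (r i) * ω i := by
          simp [zernikeRPoly_eval, mul_comm]
  rw [hrad]
  rcases Nat.eq_zero_or_pos N with hN0 | hNpos
  · -- N = 0 : constant angular factor
    subst hN0
    have hSc : ∀ θ, zernikeS 0 ℓ θ = 1 / Real.sqrt (2 * Real.pi) := fun θ => if_pos rfl
    simp only [hSc]
    rw [intervalIntegral.integral_const, Finset.sum_const, Nat.card_Icc]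
    simp only [smul_eq_mul, nsmul_eq_mul, sub_zero]
    congr 1
    push_cast
    have h2m : (2:ℝ) * m ≠ 0 := hm0.ne'
    field_simp
  · -- N > 0 : both angular factors vanish
    have hNlt : N < 2 * m := by omega
    have hS0 : (∫ θ in (0:ℝ)..(2 * Real.pi), zernikeS N ℓ θ) = 0 := by
      by_cases hl : ℓ = 0
      · simp only [zernikeS, if_neg hNpos.ne', if_pos hl]
        rw [intervalIntegral.integral_div, int_sin N hNpos]
        simp
      · simp only [zernikeS, if_neg hNpos.ne', if_neg hl]
        rw [intervalIntegral.integral_div, int_cos N hNpos]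
        simp
    have hsum0 : (∑ j ∈ Finset.Icc 1 (2 * m),
        (2 * Real.pi / (2 * m)) * zernikeS N ℓ ((j : ℝ) * (2 * Real.pi / (2 * m)))) = 0 := by
      rw [← Finset.mul_sum]
      by_cases hl : ℓ = 0
      · simp only [zernikeS, if_neg hNpos.ne', if_pos hl]
        rw [← Finset.sum_div]
        have h := key_sin_sum (2 * m) N hNpos hNlt
        push_cast at h ⊢
        simp [h]
      · simp only [zernikeS, if_neg hNpos.ne', if_neg hl]
        rw [← Finset.sum_div]
        have h := key_cos_sum (2 * m) N hNpos hNlt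
        push_cast at h ⊢
        simp [h]
    rw [hS0, hsum0]
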